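/- (Theorem 1.) Under the OGC setting: for every admissible sequence z (i.e., z k ∈ U k for all k) and every α > 0, limsup_{n→∞} (1/n)·∑_{k=1}^{n} (F k (y k) − F k (z k)) ≤ K1·α + K2·(1 + αλ)·ε/α + (K3/α)·limsup_{n→∞} (1/n)·∑_{k=1}^{n} ‖z k − z (k+1)‖, where K1 = G²/2, K2 = (2(D + αG) + (1 + αλ)ε)/2, and K3 = D + B. -/

import Mathlib

open RealInnerProductSpace Finset Filter

lemma ogc_grad_ineq {H : Type*} [NormedAddCommGroup H] [InnerProductSpace ℝ H]
    {f : H → ℝ} {g : H} (p q : H) (hf : ConvexOn ℝ Set.univ f)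
    (hg : HasFDerivAt f (innerSL ℝ g) p) :
    f p - f q ≤ ⟪g, p - q⟫ := by
  set A : ℝ → H := fun t => t • (p - q) + q with hA
  have hconv : ConvexOn ℝ Set.univ (f ∘ A) := by
    have := hf.comp_affineMap
      ((LinearMap.toSpanSingleton ℝ H (p - q)).toAffineMap + AffineMap.const ℝ ℝ q)
    have hA' : A = ⇑((LinearMap.toSpanSingleton ℝ H (p - q)).toAffineMap
        + AffineMap.const ℝ ℝ q) := by
      ext t; simp [A]
    rw [hA']; simpa [Set.preimage_univ] using this
  have hder : HasDerivAt (f ∘ A) ⟪g, p - q⟫ 1 := by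
    have h1 : HasDerivAt A (p - q) 1 := by
      simpa [A] using ((hasDerivAt_id (1:ℝ)).smul_const (p - q)).add_const q
    have h2 : HasFDerivAt f (innerSL ℝ g) (A 1) := by simpa [A] using hg
    simpa using h2.comp_hasDerivAt 1 h1
  have hslope := hconv.slope_le_of_hasDerivAt (Set.mem_univ 0) (Set.mem_univ 1)
    one_pos hder
  have h0 : A 0 = q := by simp [A]
  have h1 : A 1 = p := by simp [A]
  simpa [slope, h0, h1] using hslope

lemma ogc_proj_ineq {H : Type*} [NormedAddCommGroup H] [InnerProductSpace ℝ H]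
    {v p u : H} (h : ⟪v - p, u - p⟫ ≤ 0) : ‖p - u‖ ≤ ‖v - u‖ := by
  have hexp : ‖v - u‖ ^ 2 = ‖v - p‖ ^ 2 + 2 * ⟪v - p, p - u⟫ + ‖p - u‖ ^ 2 := by
    have hvu : v - u = (v - p) + (p - u) := by abel
    rw [hvu, @norm_add_sq_real]
  have h2 : 0 ≤ ⟪v - p, p - u⟫ := by
    have : ⟪v - p, p - u⟫ = -⟪v - p, u - p⟫ := by
      rw [← inner_neg_right]; congr 1; abel
    rw [this]; linarith
  nlinarith [norm_nonneg (p - u), norm_nonneg (v - u), norm_nonneg (v - p)]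

set_option maxHeartbeats 2000000

/-- Theorem 1: the average dynamic regret of the Online Gradient Control algorithm
satisfies `limsup rₙ(z)/n ≤ K1·α + K2·(1+αλ)·ε/α + (K3/α)·limsup V(z_{1:n})/n`, with
`K1 = G²/2`, `K2 = (2(D + αG) + (1 + αλ)ε)/2`, `K3 = D + B`, for every admissible
comparator sequence `z` and every step size `α > 0`. -/
theorem ogc_dynamic_regret
    {H : Type*} [NormedAddCommGroup H] [InnerProductSpace ℝ H]
    (α ε lam G D B : ℝ) (hα : 0 < α) (hε : 0 ≤ ε) (hlam : 0 ≤ lam)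
    (hG : 0 ≤ G) (hD : 0 ≤ D) (hB : 0 ≤ B)
    (S U : ℕ → Set H) (F : ℕ → H → ℝ) (F' : ℕ → H → H)
    (y x yhat : ℕ → H)
    -- the sets S n : nonempty, closed, convex, in the ball of radius B, diameter ≤ D
    (hSne : ∀ n, 1 ≤ n → (S n).Nonempty)
    (hScl : ∀ n, 1 ≤ n → IsClosed (S n))
    (hScv : ∀ n, 1 ≤ n → Convex ℝ (S n))
    (hSball : ∀ n, 1 ≤ n → ∀ p ∈ S n, ‖p‖ ≤ B)
    (hSdiam : ∀ n, 1 ≤ n → ∀ p ∈ S n, ∀ q ∈ S n, ‖p - q‖ ≤ D)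
    -- the sets U n ⊆ S n : nonempty, closed, convex
    (hUS : ∀ n, 1 ≤ n → U n ⊆ S n)
    (hUne : ∀ n, 1 ≤ n → (U n).Nonempty)
    (hUcl : ∀ n, 1 ≤ n → IsClosed (U n))
    (hUcv : ∀ n, 1 ≤ n → Convex ℝ (U n))
    -- the objectives F n : convex, differentiable with gradient F' n bounded by G
    -- and lam-Lipschitz
    (hFconv : ∀ n, 1 ≤ n → ConvexOn ℝ Set.univ (F n))
    (hgrad : ∀ n, 1 ≤ n → ∀ p, HasFDerivAt (F n) (innerSL ℝ (F' n p)) p)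
    (hGbound : ∀ n, 1 ≤ n → ∀ p, ‖F' n p‖ ≤ G)
    (hLip : ∀ n, 1 ≤ n → ∀ p q, ‖F' n p - F' n q‖ ≤ lam * ‖p - q‖)
    -- OGC iterates
    (hyS : ∀ n, 1 ≤ n → y n ∈ S n)
    (hmeas : ∀ n, 1 ≤ n → ‖y n - yhat n‖ ≤ ε)
    (hxU : ∀ n, 1 ≤ n → x (n + 1) ∈ U n)
    (hxproj : ∀ n, 1 ≤ n → ∀ u ∈ U n,
      ⟪(yhat n - α • F' n (yhat n)) - x (n + 1), u - x (n + 1)⟫ ≤ 0)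
    (hyS' : ∀ n, 1 ≤ n → y (n + 1) ∈ S (n + 1))
    (hyproj : ∀ n, 1 ≤ n → ∀ u ∈ S (n + 1),
      ⟪x (n + 1) - y (n + 1), u - y (n + 1)⟫ ≤ 0)
    -- the claim
    (z : ℕ → H) (hz : ∀ k, 1 ≤ k → z k ∈ U k) :
    limsup (fun n : ℕ => (1 / (n : ℝ)) * ∑ k ∈ Finset.Icc 1 n, (F k (y k) - F k (z k)))
        atTop
      ≤ (G ^ 2 / 2) * α
        + ((2 * (D + α * G) + (1 + α * lam) * ε) / 2) * ((1 + α * lam) * ε) / α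
        + ((D + B) / α)
          * limsup (fun n : ℕ => (1 / (n : ℝ)) * ∑ k ∈ Finset.Icc 1 n, ‖z k - z (k + 1)‖)
              atTop := by
  -- notation
  set E : ℝ := (1 + α * lam) * ε with hE_def
  have hE : 0 ≤ E := by positivity
  set C : ℝ := α ^ 2 * G ^ 2 + 2 * E * (D + α * G) + E ^ 2 with hC_def
  set K : ℝ := (G ^ 2 / 2) * α
      + ((2 * (D + α * G) + (1 + α * lam) * ε) / 2) * ((1 + α * lam) * ε) / α with hK_def
  have hK : C / (2 * α) = K := by
    rw [hK_def, hC_def, hE_def]; field_simp; ring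
  -- basic membership facts
  have hzS : ∀ k, 1 ≤ k → z k ∈ S k := fun k hk => hUS k hk (hz k hk)
  -- per-step inequality
  have step : ∀ k, 1 ≤ k → 2 * α * (F k (y k) - F k (z k)) + ‖x (k + 1) - z k‖ ^ 2
      ≤ C + ‖y k - z k‖ ^ 2 := by
    intro k hk
    set g := F' k (yhat k)
    set h := F' k (y k)
    have h1 : F k (y k) - F k (z k) ≤ ⟪h, y k - z k⟫ :=
      ogc_grad_ineq (y k) (z k) (hFconv k hk) (hgrad k hk (y k))
    have hyD : ‖y k - z k‖ ≤ D := hSdiam k hk _ (hyS k hk) _ (hzS k hk)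
    have hproj : ‖x (k + 1) - z k‖ ≤ ‖(yhat k - α • g) - z k‖ :=
      ogc_proj_ineq (hxproj k hk (z k) (hz k hk))
    have hgh : ‖g - h‖ ≤ lam * ε := by
      have := hLip k hk (yhat k) (y k)
      have hm : ‖yhat k - y k‖ ≤ ε := by rw [norm_sub_rev]; exact hmeas k hk
      calc ‖g - h‖ ≤ lam * ‖yhat k - y k‖ := this
        _ ≤ lam * ε := by nlinarith
    have he : ‖(yhat k - α • g) - (y k - α • h)‖ ≤ E := by
      have heq : (yhat k - α • g) - (y k - α • h) = (yhat k - y k) + α • (h - g) := by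
        rw [smul_sub]; abel
      rw [heq]
      calc ‖(yhat k - y k) + α • (h - g)‖ ≤ ‖yhat k - y k‖ + ‖α • (h - g)‖ := norm_add_le _ _
        _ ≤ ε + α * (lam * ε) := by
            have hm : ‖yhat k - y k‖ ≤ ε := by rw [norm_sub_rev]; exact hmeas k hk
            have : ‖α • (h - g)‖ = α * ‖h - g‖ := by
              rw [norm_smul, Real.norm_eq_abs, abs_of_pos hα]
            rw [this]
            have : ‖h - g‖ ≤ lam * ε := by rw [norm_sub_rev]; exact hgh
            nlinarith
        _ = E := by rw [hE_def]; ring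
    have hh : ‖h‖ ≤ G := hGbound k hk (y k)
    have hw : ‖(y k - α • h) - z k‖ ≤ D + α * G := by
      have heq : (y k - α • h) - z k = (y k - z k) + (-α) • h := by
        rw [neg_smul]; abel
      rw [heq]
      calc ‖(y k - z k) + (-α) • h‖ ≤ ‖y k - z k‖ + ‖(-α) • h‖ := norm_add_le _ _
        _ ≤ D + α * G := by
            have : ‖(-α) • h‖ = α * ‖h‖ := by
              rw [norm_smul, Real.norm_eq_abs, abs_neg, abs_of_pos hα]
            rw [this]; nlinarith
    have hv : ‖(yhat k - α • g) - z k‖ ≤ ‖(y k - α • h) - z k‖ + E := by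
      have heq : (yhat k - α • g) - z k
          = ((y k - α • h) - z k) + ((yhat k - α • g) - (y k - α • h)) := by abel
      rw [heq]
      calc _ ≤ ‖(y k - α • h) - z k‖ + ‖(yhat k - α • g) - (y k - α • h)‖ := norm_add_le _ _
        _ ≤ _ := by linarith
    have hexp : ‖(y k - α • h) - z k‖ ^ 2
        = ‖y k - z k‖ ^ 2 - 2 * α * ⟪h, y k - z k⟫ + α ^ 2 * ‖h‖ ^ 2 := by
      have heq : (y k - α • h) - z k = (y k - z k) - α • h := by abel
      rw [heq, @norm_sub_sq_real, real_inner_smul_right, real_inner_comm, norm_smul,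
        Real.norm_eq_abs, abs_of_pos hα]
      ring
    have hx2 : ‖x (k + 1) - z k‖ ^ 2
        ≤ ‖(y k - α • h) - z k‖ ^ 2 + 2 * E * (D + α * G) + E ^ 2 := by
      have hchain : ‖x (k + 1) - z k‖ ≤ ‖(y k - α • h) - z k‖ + E := hproj.trans hv
      have hsq : ‖x (k + 1) - z k‖ ^ 2 ≤ (‖(y k - α • h) - z k‖ + E) ^ 2 :=
        pow_le_pow_left₀ (norm_nonneg _) hchain 2
      nlinarith [hsq, hw, hE, norm_nonneg ((y k - α • h) - z k)]
    have hh2 : α ^ 2 * ‖h‖ ^ 2 ≤ α ^ 2 * G ^ 2 := by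
      nlinarith [mul_le_mul hh hh (norm_nonneg h) hG, sq_nonneg α]
    have h1' : 2 * α * (F k (y k) - F k (z k)) ≤ 2 * α * ⟪h, y k - z k⟫ := by
      nlinarith [hα.le]
    rw [hC_def]; linarith
  -- telescoping inequality
  have tele : ∀ k, 1 ≤ k → ‖y (k + 1) - z (k + 1)‖ ^ 2
      ≤ ‖x (k + 1) - z k‖ ^ 2 + 2 * (D + B) * ‖z k - z (k + 1)‖ := by
    intro k hk
    have hk1 : 1 ≤ k + 1 := by omega
    have hz1 : z (k + 1) ∈ S (k + 1) := hzS (k + 1) hk1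
    have hp : ‖y (k + 1) - z (k + 1)‖ ≤ ‖x (k + 1) - z (k + 1)‖ :=
      ogc_proj_ineq (hyproj k hk _ hz1)
    have htri : ‖x (k + 1) - z (k + 1)‖ ≤ ‖x (k + 1) - z k‖ + ‖z k - z (k + 1)‖ := by
      have heq : x (k + 1) - z (k + 1) = (x (k + 1) - z k) + (z k - z (k + 1)) := by abel
      rw [heq]; exact norm_add_le _ _
    have hb : ‖x (k + 1) - z k‖ ≤ D := hSdiam k hk _ (hUS k hk (hxU k hk)) _ (hzS k hk)
    have hd : ‖z k - z (k + 1)‖ ≤ 2 * B := by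
      calc ‖z k - z (k + 1)‖ ≤ ‖z k‖ + ‖z (k + 1)‖ := norm_sub_le _ _
        _ ≤ 2 * B := by
            have := hSball k hk _ (hzS k hk)
            have := hSball (k + 1) hk1 _ hz1
            linarith
    nlinarith [hp, htri, hb, hd, norm_nonneg (z k - z (k + 1)),
      norm_nonneg (y (k + 1) - z (k + 1)), norm_nonneg (x (k + 1) - z k),
      norm_nonneg (x (k + 1) - z (k + 1))]
  -- summed inequality
  have hsum : ∀ n, 1 ≤ n →
      (∑ k ∈ Finset.Icc 1 n, 2 * α * (F k (y k) - F k (z k))) + ‖x (n + 1) - z n‖ ^ 2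
        ≤ (n : ℝ) * C + ‖y 1 - z 1‖ ^ 2
          + 2 * (D + B) * ∑ k ∈ Finset.Icc 1 (n - 1), ‖z k - z (k + 1)‖ := by
    intro n hn
    induction n, hn using Nat.le_induction with
    | base =>
        simp only [Finset.Icc_self, Finset.sum_singleton, Nat.sub_self,
          show (1:ℕ) - 1 = 0 from rfl]
        have := step 1 le_rfl
        have hs : (∑ k ∈ Finset.Icc 1 0, ‖z k - z (k + 1)‖) = 0 := by simp
        rw [hs]
        push_cast
        nlinarith [this, norm_nonneg (z 1 - z 2), hD, hB]
    | succ n hn ih =>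
        obtain ⟨m, rfl⟩ : ∃ m, n = m + 1 := ⟨n - 1, by omega⟩
        have hstep := step (m + 2) (by omega)
        have htele := tele (m + 1) (by omega)
        have hsplit : (∑ k ∈ Finset.Icc 1 (m + 2), 2 * α * (F k (y k) - F k (z k)))
            = (∑ k ∈ Finset.Icc 1 (m + 1), 2 * α * (F k (y k) - F k (z k)))
              + 2 * α * (F (m + 2) (y (m + 2)) - F (m + 2) (z (m + 2))) := by
          rw [Finset.sum_Icc_succ_top (by omega)]
        have hsplit2 : (∑ k ∈ Finset.Icc 1 (m + 2 - 1), ‖z k - z (k + 1)‖)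
            = (∑ k ∈ Finset.Icc 1 (m + 1 - 1), ‖z k - z (k + 1)‖)
              + ‖z (m + 1) - z (m + 1 + 1)‖ := by
          show (∑ k ∈ Finset.Icc 1 (m + 1), ‖z k - z (k + 1)‖) = _
          rw [Finset.sum_Icc_succ_top (by omega)]
          simp
        rw [hsplit, hsplit2]
        push_cast
        push_cast at ih
        nlinarith [ih, hstep, htele]
  -- pointwise bound on the averaged regret, n ≥ 1
  have main : ∀ n : ℕ, 1 ≤ n →
      (1 / (n : ℝ)) * ∑ k ∈ Finset.Icc 1 n, (F k (y k) - F k (z k))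
        ≤ K + D ^ 2 / (2 * α * n)
          + ((D + B) / α) * ((1 / (n : ℝ)) * ∑ k ∈ Finset.Icc 1 n, ‖z k - z (k + 1)‖) := by
    intro n hn
    have hN : (0:ℝ) < n := by exact_mod_cast hn
    set R : ℝ := ∑ k ∈ Finset.Icc 1 n, (F k (y k) - F k (z k)) with hR
    set T : ℝ := ∑ k ∈ Finset.Icc 1 n, ‖z k - z (k + 1)‖ with hT
    have hTmono : (∑ k ∈ Finset.Icc 1 (n - 1), ‖z k - z (k + 1)‖) ≤ T := by
      apply Finset.sum_le_sum_of_subset_of_nonneg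
      · exact Finset.Icc_subset_Icc_right (by omega)
      · intro i _ _; exact norm_nonneg _
    have hy1 : ‖y 1 - z 1‖ ≤ D := hSdiam 1 le_rfl _ (hyS 1 le_rfl) _ (hzS 1 le_rfl)
    have h2sum : 2 * α * R ≤ (n : ℝ) * C + D ^ 2 + 2 * (D + B) * T := by
      have := hsum n hn
      rw [← Finset.mul_sum] at this
      nlinarith [this, hTmono, hy1, norm_nonneg (x (n + 1) - z n), norm_nonneg (y 1 - z 1),
        hD, hB]
    have hRle : R ≤ (n : ℝ) * (C / (2 * α)) + D ^ 2 / (2 * α) + ((D + B) / α) * T := by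
      have heq : (n : ℝ) * (C / (2 * α)) + D ^ 2 / (2 * α) + ((D + B) / α) * T
          = ((n : ℝ) * C + D ^ 2 + 2 * (D + B) * T) / (2 * α) := by
        field_simp
      rw [heq, le_div_iff₀ (by positivity)]
      linarith
    calc (1 / (n : ℝ)) * R
        ≤ (1 / (n : ℝ)) * ((n : ℝ) * (C / (2 * α)) + D ^ 2 / (2 * α) + ((D + B) / α) * T) := by
          apply mul_le_mul_of_nonneg_left hRle (by positivity)
      _ = C / (2 * α) + D ^ 2 / (2 * α * n) + ((D + B) / α) * ((1 / (n : ℝ)) * T) := by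
          field_simp
      _ = K + D ^ 2 / (2 * α * n) + ((D + B) / α) * ((1 / (n : ℝ)) * T) := by rw [hK]
  -- boundedness facts
  have hdb : ∀ k, 1 ≤ k → ‖z k - z (k + 1)‖ ≤ 2 * B := by
    intro k hk
    calc ‖z k - z (k + 1)‖ ≤ ‖z k‖ + ‖z (k + 1)‖ := norm_sub_le _ _
      _ ≤ 2 * B := by
          have := hSball k hk _ (hzS k hk)
          have := hSball (k + 1) (by omega) _ (hzS (k + 1) (by omega))
          linarith
  set Vb : ℕ → ℝ := fun n => (1 / (n : ℝ)) * ∑ k ∈ Finset.Icc 1 n, ‖z k - z (k + 1)‖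
    with hVb_def
  set A : ℕ → ℝ := fun n => (1 / (n : ℝ)) * ∑ k ∈ Finset.Icc 1 n, (F k (y k) - F k (z k))
    with hA_def
  have hVb_ub : ∀ n, Vb n ≤ 2 * B := by
    intro n
    rcases Nat.eq_zero_or_pos n with rfl | hn
    · simp [Vb]; positivity
    · have hN : (0:ℝ) < n := by exact_mod_cast hn
      have hsumle : (∑ k ∈ Finset.Icc 1 n, ‖z k - z (k + 1)‖) ≤ (n : ℝ) * (2 * B) := by
        calc (∑ k ∈ Finset.Icc 1 n, ‖z k - z (k + 1)‖)
            ≤ ∑ k ∈ Finset.Icc 1 n, (2 * B) := by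
              apply Finset.sum_le_sum
              intro i hi
              exact hdb i (Finset.mem_Icc.mp hi).1
          _ = (n : ℝ) * (2 * B) := by
              rw [Finset.sum_const, Nat.card_Icc]
              simp [nsmul_eq_mul]
      calc Vb n = (1 / (n : ℝ)) * ∑ k ∈ Finset.Icc 1 n, ‖z k - z (k + 1)‖ := rfl
        _ ≤ (1 / (n : ℝ)) * ((n : ℝ) * (2 * B)) := by
            exact mul_le_mul_of_nonneg_left hsumle (by positivity)
        _ = 2 * B := by field_simp
  have hVb_lb : ∀ n, 0 ≤ Vb n := by
    intro n
    apply mul_nonneg (by positivity)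
    exact Finset.sum_nonneg fun i _ => norm_nonneg _
  have hA_lb : ∀ n, -(G * D) ≤ A n := by
    intro n
    rcases Nat.eq_zero_or_pos n with rfl | hn
    · simp [A]; positivity
    · have hN : (0:ℝ) < n := by exact_mod_cast hn
      have hterm : ∀ k, 1 ≤ k → -(G * D) ≤ F k (y k) - F k (z k) := by
        intro k hk
        have h1 : F k (z k) - F k (y k) ≤ ⟪F' k (z k), z k - y k⟫ :=
          ogc_grad_ineq (z k) (y k) (hFconv k hk) (hgrad k hk (z k))
        have h2 : ⟪F' k (z k), z k - y k⟫ ≤ ‖F' k (z k)‖ * ‖z k - y k‖ :=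
          real_inner_le_norm _ _
        have h3 : ‖F' k (z k)‖ ≤ G := hGbound k hk (z k)
        have h4 : ‖z k - y k‖ ≤ D := hSdiam k hk _ (hzS k hk) _ (hyS k hk)
        nlinarith [norm_nonneg (F' k (z k)), norm_nonneg (z k - y k)]
      have hsumge : -((n : ℝ) * (G * D)) ≤ ∑ k ∈ Finset.Icc 1 n, (F k (y k) - F k (z k)) := by
        calc -((n : ℝ) * (G * D)) = ∑ k ∈ Finset.Icc 1 n, (-(G * D)) := by
              rw [Finset.sum_const, Nat.card_Icc]
              simp [nsmul_eq_mul]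
              try ring
          _ ≤ _ := by
              apply Finset.sum_le_sum
              intro i hi
              exact hterm i (Finset.mem_Icc.mp hi).1
      calc -(G * D) = (1 / (n : ℝ)) * (-((n : ℝ) * (G * D))) := by
            field_simp
        _ ≤ A n := mul_le_mul_of_nonneg_left hsumge (by positivity)
  -- the limsup argument
  show limsup A atTop ≤ K + ((D + B) / α) * limsup Vb atTop
  set c : ℝ := (D + B) / α with hc_def
  have hc : 0 ≤ c := by positivity
  set L : ℝ := limsup Vb atTop with hL_def
  apply le_of_forall_gt_imp_ge_of_dense
  intro b hb
  set δ : ℝ := b - (K + c * L) with hδ_def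
  have hδ : 0 < δ := by simp [hδ_def]; linarith
  have hδ' : 0 < δ / (2 * (c + 1)) := by positivity
  have hbddV : IsBoundedUnder (· ≤ ·) atTop Vb :=
    isBoundedUnder_of ⟨2 * B, fun n => hVb_ub n⟩
  have hev1 : ∀ᶠ n in atTop, Vb n < L + δ / (2 * (c + 1)) :=
    eventually_lt_of_limsup_lt (by linarith) hbddV
  have hev2 : ∀ᶠ n : ℕ in atTop, D ^ 2 / (2 * α * (n : ℝ)) < δ / 2 := by
    have ht : Tendsto (fun n : ℕ => D ^ 2 / (2 * α * (n : ℝ))) atTop (nhds 0) := by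
      have := tendsto_const_div_atTop_nhds_zero_nat (D ^ 2 / (2 * α))
      simpa [div_div, mul_assoc] using this
    exact ht.eventually_lt_const (by positivity)
  have hev3 : ∀ᶠ n : ℕ in atTop, 1 ≤ n := eventually_ge_atTop 1
  have hco : IsCoboundedUnder (· ≤ ·) atTop A :=
    IsBoundedUnder.isCoboundedUnder_le (isBoundedUnder_of ⟨-(G * D), fun n => hA_lb n⟩)
  have hup : ∀ᶠ n : ℕ in atTop, A n ≤ b := by
    filter_upwards [hev1, hev2, hev3] with n h1 h2 h3
    have hm := main n h3
    have h4 : c * (δ / (2 * (c + 1))) ≤ δ / 2 := by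
      have heq : c * (δ / (2 * (c + 1))) = (c * δ) / (2 * (c + 1)) := by ring
      rw [heq, div_le_div_iff₀ (by positivity) (by norm_num : (0:ℝ) < 2)]
      nlinarith [hδ.le, hc, mul_nonneg hc hδ.le]
    have h5 : c * Vb n ≤ c * L + c * (δ / (2 * (c + 1))) := by
      rw [← mul_add]; exact mul_le_mul_of_nonneg_left h1.le hc
    have h6 : A n ≤ K + D ^ 2 / (2 * α * n) + c * Vb n := hm
    have hfin : A n ≤ K + c * L + δ := by
      clear_value K c L δ Vb A
      linarith [h2.le, h4, h5, h6]
    calc A n ≤ K + c * L + δ := hfin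
      _ = b := by rw [hδ_def]; ring
  exact limsup_le_of_le hco hup
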